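/- arXiv:2312.01880 — 2 statements merged into one kernel-verified Lean document; each statement's English description precedes it below -/
import Mathlib

section
/- Let M be a matching, and suppose in G_M there is an M-alternating path v_1,...,v_k with first and last edges in M, and disjoint blocking edges y_1v_1 and y_2v_k (with {y_1,v_1} ∩ {y_2,v_k} = ∅). Then G_M contains one of the following: an M-alternating cycle with a blocking edge, or an M-alternating path connecting two disjoint blocking edges. -/
open Finset
open scoped Classical

noncomputable section

/-- A (partial) matching on a graph, given as a symmetric partner function. -/
def IsMatchingOn {W : Type*} (H : SimpleGraph W) (f : W → Option W) : Prop :=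
  (∀ v w, f v = some w → f w = some v) ∧ (∀ v w, f v = some w → H.Adj v w)

/-- Number of matched vertices of a partner function. -/
def msize {W : Type*} [Fintype W] (f : W → Option W) : ℕ :=
  (Finset.univ.filter (fun x => f x ≠ none)).card

/-- f is a maximum-size matching on H. -/
def MaxMatchingOn {W : Type*} [Fintype W] (H : SimpleGraph W) (f : W → Option W) : Prop :=
  IsMatchingOn H f ∧ ∀ g, IsMatchingOn H g → msize g ≤ msize f

variable {V : Type*} [Fintype V] [DecidableEq V]

/-- Rank of a situation (partner or unmatched); smaller is better, being
unmatched is worst (any neighbor is preferred to being unmatched). -/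
def rkv (rank : V → V → ℕ) (v : V) : Option V → WithTop ℕ
  | none => ⊤
  | some w => (rank v w : WithTop ℕ)

/-- vote of v comparing situation s to situation t: +1 if v prefers s, -1 if v prefers t. -/
def vote (rank : V → V → ℕ) (v : V) (s t : Option V) : ℤ :=
  if rkv rank v s < rkv rank v t then 1 else if rkv rank v t < rkv rank v s then -1 else 0

variable (G : SimpleGraph V) (rank : V → V → ℕ)

/-- The preferences are strict (a linear order) on the neighbors of each node. -/
def StrictPrefs : Prop := ∀ u v w, G.Adj u v → G.Adj u w → rank u v = rank u w → v = w

/-- g is more popular than f : strictly more nodes prefer g than prefer f. -/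
def MorePopular (g f : V → Option V) : Prop :=
  (Finset.univ.filter (fun v => rkv rank v (g v) < rkv rank v (f v))).card >
  (Finset.univ.filter (fun v => rkv rank v (f v) < rkv rank v (g v))).card

/-- f is popular: no matching is more popular than f. -/
def PopularM (f : V → Option V) : Prop :=
  ∀ g, IsMatchingOn G g → ¬ MorePopular rank g f

/-- uv is a blocking edge for matching f. -/
def BlockingEdge (f : V → Option V) (u v : V) : Prop :=
  G.Adj u v ∧ f u ≠ some v ∧
    rkv rank u (some v) < rkv rank u (f u) ∧ rkv rank v (some u) < rkv rank v (f v)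

/-- Vote based weight of an edge uv. -/
def wE (f : V → Option V) (u v : V) : ℤ :=
  vote rank u (some v) (f u) + vote rank v (some u) (f v)

/-- Vote based weight of the loop at u. -/
def wL (f : V → Option V) (u : V) : ℤ := if f u = none then 0 else -1

/-- G_M : G minus the edges of weight -2. -/
def GMgraph (f : V → Option V) : SimpleGraph V where
  Adj u v := G.Adj u v ∧ wE rank f u v ≠ -2
  symm := ⟨by
    intro u v h
    refine ⟨h.1.symm, ?_⟩
    have h2 := h.2
    simp only [wE] at h2 ⊢
    omega⟩
  loopless := ⟨fun v h => G.irrefl h.1⟩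

/-- An M-alternating path p 0, p 1, ..., p n (n edges) in graph H with matching f. -/
def AltPath {W : Type*} (H : SimpleGraph W) (f : W → Option W) (p : ℕ → W) (n : ℕ) : Prop :=
  (∀ i j, i ≤ n → j ≤ n → p i = p j → i = j) ∧
  (∀ i, i < n → H.Adj (p i) (p (i + 1))) ∧
  (∀ i, i + 1 < n → (f (p i) = some (p (i + 1)) ↔ ¬ f (p (i + 1)) = some (p (i + 2))))

/-- An M-alternating cycle p 0, ..., p n = p 0 (n edges, n even), with
matching edges at odd positions. -/
def AltCycle {W : Type*} (H : SimpleGraph W) (f : W → Option W) (p : ℕ → W) (n : ℕ) : Prop :=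
  4 ≤ n ∧ Even n ∧ p n = p 0 ∧ (∀ i j, i < n → j < n → p i = p j → i = j) ∧
  (∀ i, i < n → H.Adj (p i) (p (i + 1))) ∧
  (∀ i, i < n → (f (p i) = some (p (i + 1)) ↔ Odd i))

/-- Blocking structure (i): an alternating cycle in G_M with a blocking edge. -/
def StructI (f : V → Option V) : Prop :=
  ∃ (p : ℕ → V) (n : ℕ), AltCycle (GMgraph G rank f) f p n ∧
    ∃ i, i < n ∧ BlockingEdge G rank f (p i) (p (i + 1))

/-- Blocking structure (ii): an alternating path in G_M whose first and last
edges are two disjoint blocking edges. -/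
def StructII (f : V → Option V) : Prop :=
  ∃ (p : ℕ → V) (n : ℕ), 3 ≤ n ∧ AltPath (GMgraph G rank f) f p n ∧
    BlockingEdge G rank f (p 0) (p 1) ∧ BlockingEdge G rank f (p (n - 1)) (p n)

/-- Blocking structure (iii): an alternating path in G_M from an unmatched node
ending in a blocking edge. -/
def StructIII (f : V → Option V) : Prop :=
  ∃ (p : ℕ → V) (n : ℕ), 1 ≤ n ∧ AltPath (GMgraph G rank f) f p n ∧ f (p 0) = none ∧
    BlockingEdge G rank f (p (n - 1)) (p n)

/-- Vertex set of the auxiliary graph G_M^* : original nodes, blocking nodes b_v,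
star nodes b_S (indexed by the middle node of the star), and the contracted node u. -/
abbrev Vstar (V : Type*) := V ⊕ V ⊕ V ⊕ Unit

def origV : V → Vstar V := Sum.inl
def bNodeV : V → Vstar V := fun v => Sum.inr (Sum.inl v)
def sNodeV : V → Vstar V := fun v => Sum.inr (Sum.inr (Sum.inl v))
def uNode : Vstar V := Sum.inr (Sum.inr (Sum.inr ()))

/-- v is an endpoint of some blocking edge. -/
def IsBlockEnd (f : V → Option V) (v : V) : Prop := ∃ w, BlockingEdge G rank f v w

/-- v is a leaf node: incident to exactly one blocking edge. -/
def IsLeafNode (f : V → Option V) (v : V) : Prop := ∃! w, BlockingEdge G rank f v w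

/-- v is a leaf of a star: a leaf node whose unique blocking neighbor z also has
another leaf node attached by a blocking edge. -/
def IsStarLeaf (f : V → Option V) (v : V) : Prop :=
  IsLeafNode G rank f v ∧ ∃ z, BlockingEdge G rank f v z ∧
    ∃ v', v' ≠ v ∧ IsLeafNode G rank f v' ∧ BlockingEdge G rank f v' z

/-- The (unique) blocking neighbor of a leaf node. -/
def midOf (f : V → Option V) (v : V) : V :=
  if h : ∃ z, BlockingEdge G rank f v z then h.choose else v

/-- b(v): the auxiliary unmatched node attached to the blocking-edge endpoint v. -/
def bmap (f : V → Option V) (v : V) : Vstar V :=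
  if IsStarLeaf G rank f v then sNodeV (midOf G rank f v) else bNodeV v

/-- Projection of an original node into G_M^*: unmatched nodes are contracted to u. -/
def projV (f : V → Option V) (v : V) : Vstar V :=
  if f v = none then uNode else origV v

/-- Underlying (asymmetric) edge description of G_M^*. -/
def starRel (f : V → Option V) (x y : Vstar V) : Prop :=
  (∃ v w, (GMgraph G rank f).Adj v w ∧ ¬ BlockingEdge G rank f v w ∧
    x = projV f v ∧ y = projV f w) ∨
  (∃ v, IsBlockEnd G rank f v ∧ x = projV f v ∧ y = bmap G rank f v)

/-- The auxiliary graph G_M^*. -/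
def GMstar (f : V → Option V) : SimpleGraph (Vstar V) where
  Adj x y := x ≠ y ∧ (starRel G rank f x y ∨ starRel G rank f y x)
  symm := ⟨fun x y h => ⟨h.1.symm, h.2.symm⟩⟩
  loopless := ⟨fun x h => h.1 rfl⟩

/-- The matching M viewed in G_M^*. -/
def fstar (f : V → Option V) : Vstar V → Option (Vstar V)
  | Sum.inl v => (f v).map Sum.inl
  | _ => none

/-- The dual objective of LP2. -/
def dualObj (α : V → ℝ) (y : Finset V → ℝ) : ℝ :=
  (∑ v, α v) +
    ∑ Z ∈ Finset.univ.filter (fun Z : Finset V => Odd Z.card), ((Z.card - 1 : ℝ) / 2) * y Z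

/-- Feasibility for LP2, the dual of the fractional matching LP with odd set constraints. -/
def DualFeasible (f : V → Option V) (α : V → ℝ) (y : Finset V → ℝ) : Prop :=
  (∀ v w, G.Adj v w →
    (wE rank f v w : ℝ) ≤ α v + α w +
      ∑ Z ∈ Finset.univ.filter (fun Z : Finset V => Odd Z.card ∧ v ∈ Z ∧ w ∈ Z), y Z) ∧
  (∀ v, (wL f v : ℝ) ≤ α v) ∧ (∀ Z, 0 ≤ y Z)

/-- A feasible solution of LP1: a fractional matching of G~ (loops allowed)
satisfying the odd-set constraints.  `x v v` is the value of the loop at v. -/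
def PrimalFeasible (x : V → V → ℝ) : Prop :=
  (∀ v w, x v w = x w v) ∧ (∀ v w, 0 ≤ x v w) ∧
  (∀ v w, v ≠ w → ¬ G.Adj v w → x v w = 0) ∧
  (∀ v, ∑ w, x v w = 1) ∧
  (∀ Z : Finset V, Odd Z.card →
    (∑ v ∈ Z, ∑ w ∈ Z, if v ≠ w then x v w else 0) ≤ (Z.card - 1 : ℝ))

/-- The w_M-value of a fractional matching x of G~. -/
def primalVal (f : V → Option V) (x : V → V → ℝ) : ℝ :=
  (∑ v, ∑ w, if v ≠ w then (wE rank f v w : ℝ) * x v w else 0) / 2 +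
    ∑ v, (wL f v : ℝ) * x v v

/-- A fractional matching of G~ (no odd-set constraints). -/
def FracMatching (x : V → V → ℝ) : Prop :=
  (∀ v w, x v w = x w v) ∧ (∀ v w, 0 ≤ x v w) ∧
  (∀ v w, v ≠ w → ¬ G.Adj v w → x v w = 0) ∧ (∀ v, ∑ w, x v w = 1)

/-- f is fractional popular ("truly popular"): no fractional matching has positive w_M-value. -/
def FracPopular (f : V → Option V) : Prop :=
  ∀ x, FracMatching G x → primalVal rank f x ≤ 0

/-- x is missed by some maximum matching of H (x is in the Gallai-Edmonds set D). -/
def Exposable {W : Type*} [Fintype W] (H : SimpleGraph W) (x : W) : Prop :=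
  ∃ g, MaxMatchingOn H g ∧ g x = none

/-- Reachability inside the set P by a walk of H. -/
def ReachWithin {W : Type*} (H : SimpleGraph W) (P : W → Prop) (x y : W) : Prop :=
  ∃ (p : ℕ → W) (n : ℕ), p 0 = x ∧ p n = y ∧ (∀ i, i ≤ n → P (p i)) ∧ ∀ i, i < n → H.Adj (p i) (p (i + 1))

/-- X: nodes of G_M^* reachable from blocking or star nodes on an alternating path. -/
def ReachX (f : V → Option V) (x : Vstar V) : Prop :=
  ∃ (p : ℕ → Vstar V) (n : ℕ), AltPath (GMstar G rank f) (fstar f) p n ∧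
    (∃ v, IsBlockEnd G rank f v ∧ p 0 = bmap G rank f v) ∧ p n = x

/-- K is a connected component of G_M^*[X ∩ D]. -/
def IsCompXD (f : V → Option V) (K : Finset (Vstar V)) : Prop :=
  K.Nonempty ∧
  (∀ x ∈ K, ReachX G rank f x ∧ Exposable (GMstar G rank f) x) ∧
  (∀ x ∈ K, ∀ y, ReachX G rank f y → Exposable (GMstar G rank f) y →
    (GMstar G rank f).Adj x y → y ∈ K) ∧
  (∀ x ∈ K, ∀ y ∈ K,
    ReachWithin (GMstar G rank f) (fun z => ReachX G rank f z ∧ Exposable (GMstar G rank f) z) x y)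

/-- The α of the dual witness constructed from the Gallai-Edmonds decomposition of G_M^*. -/
def alphaGE (f : V → Option V) (v : V) : ℝ :=
  if ReachX G rank f (origV v) ∧ Exposable (GMstar G rank f) (origV v) then -1
  else if ReachX G rank f (origV v) ∧ ¬ Exposable (GMstar G rank f) (origV v) ∧
      (∃ y, Exposable (GMstar G rank f) y ∧ (GMstar G rank f).Adj (origV v) y) then 1
  else 0

/-- The odd set of original nodes arising from a component K of G_M^*[X∩D]:
original members of K, with a star-node root replaced by the middle node of its star. -/
def ZofK (K : Finset (Vstar V)) : Finset V :=
  Finset.univ.filter (fun v => origV v ∈ K ∨ sNodeV v ∈ K)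

/-- The y of the dual witness constructed from the Gallai-Edmonds decomposition. -/
def yGE (f : V → Option V) (Z : Finset V) : ℝ :=
  if ∃ K, IsCompXD G rank f K ∧ 3 ≤ K.card ∧ Z = ZofK K then 2 else 0

end

section Statement5Aux

variable {V : Type*} [Fintype V] [DecidableEq V]
variable {G : SimpleGraph V} {rank : V → V → ℕ} {f : V → Option V}

lemma blockingEdge_symm (hM : IsMatchingOn G f) {u v : V}
    (h : BlockingEdge G rank f u v) : BlockingEdge G rank f v u :=
  ⟨h.1.symm, fun hc => h.2.1 (hM.1 _ _ hc), h.2.2.2, h.2.2.1⟩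

lemma blockingEdge_gm {u v : V} (h : BlockingEdge G rank f u v) :
    (GMgraph G rank f).Adj u v := by
  refine ⟨h.1, ?_⟩
  unfold wE vote
  rw [if_pos h.2.2.1, if_pos h.2.2.2]
  norm_num

lemma alt_parity {p : ℕ → V} {n : ℕ}
    (hpath : AltPath (GMgraph G rank f) f p n) (h1 : f (p 0) = some (p 1)) :
    ∀ i, i < n → (f (p i) = some (p (i + 1)) ↔ Even i) := by
  intro i
  induction i with
  | zero => intro _; simpa using h1
  | succ k ih =>
    intro hk
    have h3 := hpath.2.2 k hk
    have h4 := ih (by omega)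
    rw [Nat.even_add_one]
    constructor
    · intro hb he
      exact (h3.mp (h4.mpr he)) hb
    · intro he
      by_contra hb
      exact he (h4.mp (h3.mpr hb))

lemma structI_of_cycle (hM : IsMatchingOn G f) {p : ℕ → V} {n : ℕ}
    (hinj : ∀ i j, i ≤ n → j ≤ n → p i = p j → i = j)
    (hadj : ∀ i, i < n → (GMgraph G rank f).Adj (p i) (p (i + 1)))
    (hpar : ∀ i, i < n → (f (p i) = some (p (i + 1)) ↔ Even i))
    {s e : ℕ} (hs : s % 2 = 0) (he : e % 2 = 1) (hse : s + 3 ≤ e) (hen : e ≤ n)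
    (hb : BlockingEdge G rank f (p e) (p s)) : StructI G rank f := by
  set q : ℕ → V := fun k => if k = 0 then p e else p (s + k - 1) with hqdef
  have hq0 : q 0 = p e := by simp [hqdef]
  have hqs : ∀ k, 1 ≤ k → q k = p (s + k - 1) := by
    intro k hk
    simp only [hqdef]
    rw [if_neg (by omega)]
  have hfe : f (p e) = some (p (e - 1)) := by
    have h5 : f (p (e - 1)) = some (p (e - 1 + 1)) :=
      (hpar (e - 1) (by omega)).mpr (by rw [Nat.even_iff]; omega)
    rw [show e - 1 + 1 = e from by omega] at h5
    exact hM.1 _ _ h5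
  refine ⟨q, e - s + 1, ⟨by omega, by rw [Nat.even_iff]; omega, ?_, ?_, ?_, ?_⟩, 0, by omega, ?_⟩
  · rw [hq0, hqs (e - s + 1) (by omega)]
    congr 1
    omega
  · intro i j hi hj hij
    rcases Nat.eq_zero_or_pos i with hi0 | hi0 <;> rcases Nat.eq_zero_or_pos j with hj0 | hj0
    · omega
    · subst hi0
      rw [hq0, hqs j hj0] at hij
      have := hinj e (s + j - 1) (by omega) (by omega) hij
      omega
    · subst hj0
      rw [hq0, hqs i hi0] at hij
      have := hinj e (s + i - 1) (by omega) (by omega) hij.symm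
      omega
    · rw [hqs i hi0, hqs j hj0] at hij
      have := hinj (s + i - 1) (s + j - 1) (by omega) (by omega) hij
      omega
  · intro i hi
    rcases Nat.eq_zero_or_pos i with hi0 | hi0
    · subst hi0
      rw [hq0, hqs 1 le_rfl, show s + 1 - 1 = s from by omega]
      exact blockingEdge_gm hb
    · rw [hqs i hi0, hqs (i + 1) (by omega), show s + (i + 1) - 1 = (s + i - 1) + 1 from by omega]
      exact hadj (s + i - 1) (by omega)
  · intro i hi
    rcases Nat.eq_zero_or_pos i with hi0 | hi0
    · subst hi0
      rw [hq0, hqs 1 le_rfl, show s + 1 - 1 = s from by omega, Nat.odd_iff]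
      constructor
      · intro hcon
        rw [hfe] at hcon
        have := hinj (e - 1) s (by omega) (by omega) (Option.some.inj hcon)
        omega
      · omega
    · rw [hqs i hi0, hqs (i + 1) (by omega), show s + (i + 1) - 1 = (s + i - 1) + 1 from by omega,
        hpar (s + i - 1) (by omega), Nat.even_iff, Nat.odd_iff]
      omega
  · rw [hq0, hqs 1 le_rfl, show s + 1 - 1 = s from by omega]
    exact hb

lemma structII_of_path (hM : IsMatchingOn G f) {p : ℕ → V} {n : ℕ}
    (hinj : ∀ i j, i ≤ n → j ≤ n → p i = p j → i = j)
    (hadj : ∀ i, i < n → (GMgraph G rank f).Adj (p i) (p (i + 1)))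
    (hpar : ∀ i, i < n → (f (p i) = some (p (i + 1)) ↔ Even i))
    {s t : ℕ} (hs : s % 2 = 0) (ht : t % 2 = 1) (hst : s < t) (htn : t ≤ n)
    {X Y : V} (hbX : BlockingEdge G rank f X (p s)) (hbY : BlockingEdge G rank f Y (p t))
    (hX : ∀ k, s ≤ k → k ≤ t → X ≠ p k) (hY : ∀ k, s ≤ k → k ≤ t → Y ≠ p k)
    (hXY : X ≠ Y) : StructII G rank f := by
  set q : ℕ → V := fun k => if k = 0 then X else if k ≤ t - s + 1 then p (s + k - 1) else Y
    with hqdef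
  have hq0 : q 0 = X := by simp [hqdef]
  have hqs : ∀ k, 1 ≤ k → k ≤ t - s + 1 → q k = p (s + k - 1) := by
    intro k hk1 hk2
    simp only [hqdef]
    rw [if_neg (by omega), if_pos hk2]
  have hqm : q (t - s + 2) = Y := by
    simp only [hqdef]
    rw [if_neg (by omega), if_neg (by omega)]
  have hft : f (p t) = some (p (t - 1)) := by
    have h5 : f (p (t - 1)) = some (p (t - 1 + 1)) :=
      (hpar (t - 1) (by omega)).mpr (by rw [Nat.even_iff]; omega)
    rw [show t - 1 + 1 = t from by omega] at h5
    exact hM.1 _ _ h5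
  have hdir : ∀ i, i < t - s + 2 → (f (q i) = some (q (i + 1)) ↔ i % 2 = 1) := by
    intro i hi
    rcases Nat.eq_zero_or_pos i with hi0 | hi0
    · subst hi0
      rw [hq0, hqs 1 (by omega) (by omega), show s + 1 - 1 = s from by omega]
      constructor
      · intro hcon; exact absurd hcon hbX.2.1
      · omega
    · by_cases him : i = t - s + 1
      · subst him
        rw [hqs (t - s + 1) (by omega) le_rfl, show t - s + 1 + 1 = t - s + 2 from rfl, hqm,
          show s + (t - s + 1) - 1 = t from by omega]
        constructor
        · intro hcon
          rw [hft] at hcon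
          exact absurd (Option.some.inj hcon).symm (hY (t - 1) (by omega) (by omega))
        · omega
      · rw [hqs i hi0 (by omega), hqs (i + 1) (by omega) (by omega),
          show s + (i + 1) - 1 = (s + i - 1) + 1 from by omega,
          hpar (s + i - 1) (by omega), Nat.even_iff]
        omega
  refine ⟨q, t - s + 2, by omega, ⟨?_, ?_, ?_⟩, ?_, ?_⟩
  · intro i j hi hj hij
    have hcase : ∀ k, k ≤ t - s + 2 → k = 0 ∨ k = t - s + 2 ∨ (1 ≤ k ∧ k ≤ t - s + 1) := by
      intro k hk; omega
    rcases hcase i hi with hi0 | hi0 | hi0 <;> rcases hcase j hj with hj0 | hj0 | hj0 <;>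
      subst_vars
    · rfl
    · rw [hq0, hqm] at hij; exact absurd hij hXY
    · rw [hq0, hqs j hj0.1 hj0.2] at hij
      exact absurd hij (hX (s + j - 1) (by omega) (by omega))
    · rw [hq0, hqm] at hij; exact absurd hij.symm hXY
    · rfl
    · rw [hqm, hqs j hj0.1 hj0.2] at hij
      exact absurd hij (hY (s + j - 1) (by omega) (by omega))
    · rw [hq0, hqs i hi0.1 hi0.2] at hij
      exact absurd hij.symm (hX (s + i - 1) (by omega) (by omega))
    · rw [hqm, hqs i hi0.1 hi0.2] at hij
      exact absurd hij.symm (hY (s + i - 1) (by omega) (by omega))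
    · rw [hqs i hi0.1 hi0.2, hqs j hj0.1 hj0.2] at hij
      have := hinj (s + i - 1) (s + j - 1) (by omega) (by omega) hij
      omega
  · intro i hi
    rcases Nat.eq_zero_or_pos i with hi0 | hi0
    · subst hi0
      rw [hq0, hqs 1 (by omega) (by omega), show s + 1 - 1 = s from by omega]
      exact blockingEdge_gm hbX
    · by_cases him : i = t - s + 1
      · subst him
        rw [hqs (t - s + 1) (by omega) le_rfl, show t - s + 1 + 1 = t - s + 2 from rfl, hqm,
          show s + (t - s + 1) - 1 = t from by omega]
        exact (blockingEdge_gm hbY).symm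
      · rw [hqs i hi0 (by omega), hqs (i + 1) (by omega) (by omega),
          show s + (i + 1) - 1 = (s + i - 1) + 1 from by omega]
        exact hadj (s + i - 1) (by omega)
  · intro i hi
    rw [hdir i (by omega), hdir (i + 1) (by omega)]
    omega
  · rw [hq0, hqs 1 (by omega) (by omega), show s + 1 - 1 = s from by omega]
    exact hbX
  · rw [show t - s + 2 - 1 = t - s + 1 from by omega, hqm,
      hqs (t - s + 1) (by omega) le_rfl, show s + (t - s + 1) - 1 = t from by omega]
    exact blockingEdge_symm hM hbY

end Statement5Aux

/-- an alternating path with matching end-edges whose endpoints carry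
disjoint blocking edges yields a blocking cycle or a blocking path in G_M. -/
theorem altpath_disjoint_blocking_edges {V : Type*} [Fintype V] [DecidableEq V]
    (G : SimpleGraph V) (rank : V → V → ℕ) (hstrict : StrictPrefs G rank)
    (f : V → Option V) (hM : IsMatchingOn G f)
    (p : ℕ → V) (n : ℕ) (hn : 1 ≤ n)
    (hpath : AltPath (GMgraph G rank f) f p n)
    (h1 : f (p 0) = some (p 1)) (h2 : f (p (n - 1)) = some (p n))
    (y₁ y₂ : V)
    (hb1 : BlockingEdge G rank f y₁ (p 0)) (hb2 : BlockingEdge G rank f y₂ (p n))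
    (hd1 : y₁ ≠ y₂) (hd2 : y₁ ≠ p n) (hd3 : y₂ ≠ p 0) :
    StructI G rank f ∨ StructII G rank f := by
  have hpar := alt_parity hpath h1
  have hinj := hpath.1
  have hadj := hpath.2.1
  have hnodd : n % 2 = 1 := by
    have h2' : f (p (n - 1)) = some (p (n - 1 + 1)) := by
      rw [show n - 1 + 1 = n from by omega]; exact h2
    have := (hpar (n - 1) (by omega)).mp h2'
    rw [Nat.even_iff] at this; omega
  have hfpn : f (p n) = some (p (n - 1)) := hM.1 _ _ h2
  have hy1p1 : y₁ ≠ p 1 := by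
    intro hc
    have h5 := hb1.2.2.2
    rw [h1, hc] at h5
    exact lt_irrefl _ h5
  have hy2pn1 : y₂ ≠ p (n - 1) := by
    intro hc
    have h5 := hb2.2.2.2
    rw [hfpn, hc] at h5
    exact lt_irrefl _ h5
  have hXfun : ∀ i, 2 ≤ i → (∀ k, i ≤ k → k ≤ n → p 0 ≠ p k) := by
    intro i hi2 k hk1 hk2 hc
    have := hinj 0 k (by omega) hk2 hc
    omega
  by_cases hy1 : ∃ i, i ≤ n ∧ y₁ = p i
  · obtain ⟨i, hiN, hy1e⟩ := hy1
    subst hy1e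
    have hi0 : i ≠ 0 := fun h => hb1.1.ne (by rw [h])
    have hi1 : i ≠ 1 := fun h => hy1p1 (by rw [h])
    have hin : i ≠ n := fun h => hd2 (by rw [h])
    by_cases hie : i % 2 = 1
    · exact Or.inl (structI_of_cycle hM hinj hadj hpar (s := 0) (e := i)
        (by omega) hie (by omega) hiN hb1)
    · have hX := hXfun i (by omega)
      by_cases hy2 : ∃ j, j ≤ n ∧ y₂ = p j
      · obtain ⟨j, hjN, hy2e⟩ := hy2
        subst hy2e
        have hj0 : j ≠ 0 := fun h => hd3 (by rw [h])
        have hjn : j ≠ n := fun h => hb2.1.ne (by rw [h])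
        have hjn1 : j ≠ n - 1 := fun h => hy2pn1 (by rw [h])
        by_cases hje : j % 2 = 0
        · exact Or.inl (structI_of_cycle hM hinj hadj hpar (s := j) (e := n)
            hje hnodd (by omega) le_rfl (blockingEdge_symm hM hb2))
        · rcases lt_or_gt_of_ne (show i ≠ j from by omega) with hij | hij
          · refine Or.inr (structII_of_path hM hinj hadj hpar (s := i) (t := j)
              (by omega) (by omega) hij hjN
              (blockingEdge_symm hM hb1) (blockingEdge_symm hM hb2)
              (fun k hk1 hk2 => hX k hk1 (by omega)) ?_ ?_)
            · intro k hk1 hk2 hc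
              have := hinj n k le_rfl (by omega) hc
              omega
            · intro hc
              have := hinj 0 n (by omega) le_rfl hc
              omega
          · refine Or.inr (structII_of_path hM hinj hadj hpar (s := i) (t := n)
              (by omega) hnodd (by omega) le_rfl
              (blockingEdge_symm hM hb1) hb2 hX ?_ ?_)
            · intro k hk1 hk2 hc
              have := hinj j k (by omega) hk2 hc
              omega
            · intro hc
              have := hinj 0 j (by omega) (by omega) hc
              omega
      · push_neg at hy2
        refine Or.inr (structII_of_path hM hinj hadj hpar (s := i) (t := n)
          (by omega) hnodd (by omega) le_rfl
          (blockingEdge_symm hM hb1) hb2 hX (fun k _ hk2 => hy2 k hk2) ?_)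
        intro hc
        exact hd3 hc.symm
  · push_neg at hy1
    by_cases hy2 : ∃ j, j ≤ n ∧ y₂ = p j
    · obtain ⟨j, hjN, hy2e⟩ := hy2
      subst hy2e
      have hj0 : j ≠ 0 := fun h => hd3 (by rw [h])
      have hjn : j ≠ n := fun h => hb2.1.ne (by rw [h])
      have hjn1 : j ≠ n - 1 := fun h => hy2pn1 (by rw [h])
      by_cases hje : j % 2 = 0
      · exact Or.inl (structI_of_cycle hM hinj hadj hpar (s := j) (e := n)
          hje hnodd (by omega) le_rfl (blockingEdge_symm hM hb2))
      · refine Or.inr (structII_of_path hM hinj hadj hpar (s := 0) (t := j)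
          (by omega) (by omega) (by omega) hjN
          hb1 (blockingEdge_symm hM hb2)
          (fun k _ hk2 => hy1 k (by omega)) ?_ hd2)
        intro k hk1 hk2 hc
        have := hinj n k le_rfl (by omega) hc
        omega
    · push_neg at hy2
      exact Or.inr (structII_of_path hM hinj hadj hpar (s := 0) (t := n)
        (by omega) hnodd (by omega) le_rfl hb1 hb2
        (fun k _ hk2 => hy1 k hk2) (fun k _ hk2 => hy2 k hk2) hd1)
end

section
/- If G contains an M-alternating cycle C = v_1 - v_2 - ... - v_k - v_1 (k ≥ 4) in G_M where v_1v_k is the unique blocking edge on C, then in G_M* the walk b(v_1) - v_1 - v_2 - ... - v_k - b(v_k) is an M-alternating path between two distinct M-unmatched nodes; in particular M is not a maximum matching in G_M*. -/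
open Finset
open scoped Classical

lemma matching_augment {W : Type*} [Fintype W] (H : SimpleGraph W)
    (F : W → Option W) (hF : IsMatchingOn H F) (q : ℕ → W) (m : ℕ)
    (hodd : Odd m) (hq : AltPath H F q m)
    (h0 : F (q 0) = none) (hm : F (q m) = none) :
    ¬ MaxMatchingOn H F := by
  classical
  obtain ⟨hinj, hadj, halt⟩ := hq
  have hm1 : 1 ≤ m := hodd.pos
  -- matching edges sit at odd positions
  have hFodd : ∀ k, 2 * k + 1 < m → F (q (2 * k + 1)) = some (q (2 * k + 2)) := by
    intro k
    induction k with
    | zero =>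
      intro hk
      have h := halt 0 (by omega)
      simp only [h0] at h
      simpa using (not_not.mp (fun hx => by simp [hx] at h))
    | succ k ih =>
      intro hk
      have h₁ := ih (by omega)
      have h₂ : F (q (2 * k + 2)) = some (q (2 * k + 1)) := hF.1 _ _ h₁
      have h₃ : ¬ F (q (2 * k + 2)) = some (q (2 * k + 3)) := by
        rw [h₂]
        intro h
        have := hinj (2 * k + 1) (2 * k + 3) (by omega) (by omega) (Option.some.inj h)
        omega
      have h₄ := halt (2 * k + 2) (by omega)
      have h₅ : F (q (2 * k + 3)) = some (q (2 * k + 4)) := by tauto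
      have e1 : 2 * (k + 1) + 1 = 2 * k + 3 := by ring
      have e2 : 2 * (k + 1) + 2 = 2 * k + 4 := by ring
      rw [e1, e2]; exact h₅
  have hFoddgen : ∀ i, i < m → Odd i → F (q i) = some (q (i + 1)) := by
    intro i hi ⟨k, hk⟩
    have : i = 2 * k + 1 := by omega
    subst this; exact hFodd k hi
  have hFeven : ∀ i, 0 < i → i ≤ m → Even i → F (q i) = some (q (i - 1)) := by
    intro i h0i him hev
    have h1 : Odd (i - 1) := by
      obtain ⟨r, hr⟩ := hev; exact ⟨r - 1, by omega⟩
    have h2 : i - 1 < m := by omega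
    have := hF.1 _ _ (hFoddgen (i - 1) h2 h1)
    rwa [show i - 1 + 1 = i by omega] at this
  -- the augmented matching
  set g : W → Option W := fun x =>
    if h : ∃ i, i ≤ m ∧ q i = x then
      (if Even (Nat.find h) then some (q (Nat.find h + 1)) else some (q (Nat.find h - 1)))
    else F x with hg
  have gval : ∀ i, i ≤ m → g (q i) = if Even i then some (q (i + 1)) else some (q (i - 1)) := by
    intro i hi
    have hex : ∃ j, j ≤ m ∧ q j = q i := ⟨i, hi, rfl⟩
    have hfi : Nat.find hex = i :=
      hinj _ _ (Nat.find_spec hex).1 hi (Nat.find_spec hex).2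
    simp only [hg, dif_pos hex, hfi]
  have goff : ∀ x, (¬ ∃ i, i ≤ m ∧ q i = x) → g x = F x := by
    intro x hx; simp only [hg, dif_neg hx]
  -- partners of on-path matched vertices stay on the path
  have hpartner : ∀ j, j ≤ m → ∀ v, F (q j) = some v → ∃ i, i ≤ m ∧ q i = v := by
    intro j hj v hv
    rcases Nat.eq_zero_or_pos j with rfl | hj0
    · rw [h0] at hv; exact absurd hv (by simp)
    rcases eq_or_lt_of_le hj with rfl | hjm
    · rw [hm] at hv; exact absurd hv (by simp)
    rcases Nat.even_or_odd j with hev | hod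
    · have := hFeven j hj0 hj hev
      rw [this] at hv
      exact ⟨j - 1, by omega, Option.some.inj hv⟩
    · have := hFoddgen j hjm hod
      rw [this] at hv
      exact ⟨j + 1, by omega, Option.some.inj hv⟩
  have hgmatch : IsMatchingOn H g := by
    constructor
    · intro v w hvw
      by_cases hv : ∃ i, i ≤ m ∧ q i = v
      · obtain ⟨i, hi, rfl⟩ := hv
        rw [gval i hi] at hvw
        by_cases hev : Even i
        · rw [if_pos hev] at hvw
          obtain rfl := Option.some.inj hvw
          have hi1 : i + 1 ≤ m := by
            rcases eq_or_lt_of_le hi with rfl | h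
            · exact absurd hodd (by simp [Nat.even_iff, Nat.odd_iff] at hev ⊢; omega)
            · omega
          rw [gval (i + 1) hi1, if_neg (by simp [Nat.even_add_one, hev])]
          simp
        · rw [if_neg hev] at hvw
          obtain rfl := Option.some.inj hvw
          have hi0 : 0 < i := by
            rcases Nat.eq_zero_or_pos i with rfl | h
            · exact absurd (by simp : Even 0) hev
            · exact h
          have : Even (i - 1) := by
            simp [Nat.even_iff, Nat.odd_iff] at hev ⊢
            omega
          rw [gval (i - 1) (by omega), if_pos this, show i - 1 + 1 = i by omega]
      · rw [goff v hv] at hvw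
        have hw : ¬ ∃ i, i ≤ m ∧ q i = w := by
          rintro ⟨j, hj, rfl⟩
          have hFw : F (q j) = some v := hF.1 _ _ hvw
          exact hv (hpartner j hj v hFw)
        rw [goff w hw]
        exact hF.1 _ _ hvw
    · intro v w hvw
      by_cases hv : ∃ i, i ≤ m ∧ q i = v
      · obtain ⟨i, hi, rfl⟩ := hv
        rw [gval i hi] at hvw
        by_cases hev : Even i
        · rw [if_pos hev] at hvw
          obtain rfl := Option.some.inj hvw
          have : i < m := by
            rcases eq_or_lt_of_le hi with rfl | h
            · exact absurd hodd (by simp [Nat.even_iff, Nat.odd_iff] at hev ⊢; omega)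
            · exact h
          exact hadj i this
        · rw [if_neg hev] at hvw
          obtain rfl := Option.some.inj hvw
          have hi0 : 0 < i := by
            rcases Nat.eq_zero_or_pos i with rfl | h
            · exact absurd (by simp : Even 0) hev
            · exact h
          have := (hadj (i - 1) (by omega)).symm
          rwa [show i - 1 + 1 = i by omega] at this
      · rw [goff v hv] at hvw
        exact hF.2 _ _ hvw
  intro hmax
  have hle := hmax.2 g hgmatch
  have hsub : (Finset.univ.filter (fun x => F x ≠ none)) ⊆
      (Finset.univ.filter (fun x => g x ≠ none)) := by
    intro x hx
    simp only [Finset.mem_filter, Finset.mem_univ, true_and] at hx ⊢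
    by_cases hv : ∃ i, i ≤ m ∧ q i = x
    · obtain ⟨i, hi, rfl⟩ := hv
      rw [gval i hi]
      split <;> simp
    · rw [goff x hv]; exact hx
  have hq0mem : q 0 ∈ (Finset.univ.filter (fun x => g x ≠ none)) := by
    simp only [Finset.mem_filter, Finset.mem_univ, true_and]
    rw [gval 0 (by omega), if_pos (by simp)]
    simp
  have hq0not : q 0 ∉ (Finset.univ.filter (fun x => F x ≠ none)) := by
    simp [h0]
  have hlt : msize F < msize g := Finset.card_lt_card ⟨hsub, fun h => hq0not (h hq0mem)⟩
  omega

/-- a blocking cycle of G_M with a unique blocking edge v₁vₖ lifts to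
an M-alternating path of G_M^* between the two distinct unmatched nodes b(v₁) and
b(vₖ); in particular M is not a maximum matching of G_M^*.  (The cycle minus its
blocking edge is the alternating path p 0, ..., p n with matching end-edges.) -/
theorem blocking_cycle_lifts_to_GMstar {V : Type*} [Fintype V] [DecidableEq V]
    (G : SimpleGraph V) (rank : V → V → ℕ) (hstrict : StrictPrefs G rank)
    (f : V → Option V) (hM : IsMatchingOn G f)
    (p : ℕ → V) (n : ℕ) (hn : 3 ≤ n)
    (hpath : AltPath (GMgraph G rank f) f p n)
    (h1 : f (p 0) = some (p 1)) (h2 : f (p (n - 1)) = some (p n))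
    (hb : BlockingEdge G rank f (p 0) (p n))
    (huniq : ∀ i, i < n → ¬ BlockingEdge G rank f (p i) (p (i + 1))) :
    (∃ q : ℕ → Vstar V, AltPath (GMstar G rank f) (fstar f) q (n + 2) ∧
      q 0 = bmap G rank f (p 0) ∧ q (n + 2) = bmap G rank f (p n) ∧
      bmap G rank f (p 0) ≠ bmap G rank f (p n) ∧
      fstar f (q 0) = none ∧ fstar f (q (n + 2)) = none) ∧
    ¬ MaxMatchingOn (GMstar G rank f) (fstar f) := by
  classical
  have hinj := hpath.1
  have hadjp := hpath.2.1
  have haltp := hpath.2.2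
  -- matching edges of the path sit at even positions
  have heven : ∀ k, 2 * k < n → f (p (2 * k)) = some (p (2 * k + 1)) := by
    intro k
    induction k with
    | zero => intro _; simpa using h1
    | succ k ih =>
      intro hk
      have h₁ := ih (by omega)
      have h₂ : f (p (2 * k + 1)) = some (p (2 * k)) := hM.1 _ _ h₁
      have h₃ : ¬ f (p (2 * k + 1)) = some (p (2 * k + 2)) := by
        rw [h₂]
        intro h
        have := hinj (2 * k) (2 * k + 2) (by omega) (by omega) (Option.some.inj h)
        omega
      have h₄ := haltp (2 * k + 1) (by omega)
      have h₅ : f (p (2 * k + 2)) = some (p (2 * k + 3)) := by tauto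
      rw [show 2 * (k + 1) = 2 * k + 2 by ring]
      exact h₅
  have hnodd : Odd n := by
    rcases Nat.even_or_odd n with hev | hod
    · exfalso
      obtain ⟨r, hr⟩ := hev
      have h₁ := heven (r - 1) (by omega)
      rw [show 2 * (r - 1) = n - 2 by omega, show n - 2 + 1 = n - 1 by omega] at h₁
      have h₂ : f (p (n - 1)) = some (p (n - 2)) := hM.1 _ _ h₁
      rw [h2] at h₂
      have := hinj (n - 2) n (by omega) le_rfl (Option.some.inj h₂).symm
      omega
    · exact hod
  have hmatched : ∀ j, j ≤ n → f (p j) ≠ none := by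
    intro j hj
    rcases Nat.even_or_odd j with hev | hod
    · obtain ⟨r, hr⟩ := hev
      obtain ⟨s, hs⟩ := hnodd
      have h₁ := heven r (by omega)
      rw [show 2 * r = j by omega] at h₁
      simp [h₁]
    · obtain ⟨r, hr⟩ := hod
      have h₁ := heven r (by omega)
      have h₂ := hM.1 _ _ h₁
      rw [show 2 * r + 1 = j by omega] at h₂
      simp [h₂]
  have hproj : ∀ j, j ≤ n → projV f (p j) = origV (p j) := by
    intro j hj
    simp [projV, hmatched j hj]
  have hbsymm : BlockingEdge G rank f (p n) (p 0) := by
    obtain ⟨ha, hne, hr1, hr2⟩ := hb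
    exact ⟨ha.symm, fun h => hne (hM.1 _ _ h), hr2, hr1⟩
  have hp0n : p 0 ≠ p n := by
    intro h
    have := hinj 0 n (by omega) le_rfl h
    omega
  have hbmap_ne : bmap G rank f (p 0) ≠ bmap G rank f (p n) := by
    unfold bmap
    split_ifs with hs0 hsn hsn
    · intro h
      have hmid : midOf G rank f (p 0) = midOf G rank f (p n) := by
        simpa [sNodeV] using h
      have hm0 : midOf G rank f (p 0) = p n := by
        obtain ⟨w, hw, huw⟩ := hs0.1
        have hex : ∃ z, BlockingEdge G rank f (p 0) z := ⟨p n, hb⟩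
        rw [midOf, dif_pos hex, huw _ hex.choose_spec, huw _ hb]
      have hmn : midOf G rank f (p n) = p 0 := by
        obtain ⟨w, hw, huw⟩ := hsn.1
        have hex : ∃ z, BlockingEdge G rank f (p n) z := ⟨p 0, hbsymm⟩
        rw [midOf, dif_pos hex, huw _ hex.choose_spec, huw _ hbsymm]
      rw [hm0, hmn] at hmid
      exact hp0n hmid.symm
    · simp [sNodeV, bNodeV]
    · simp [sNodeV, bNodeV]
    · intro h
      exact hp0n (by simpa [bNodeV] using h)
  have hbmap_inr : ∀ v, ∃ y, bmap G rank f v = Sum.inr y := by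
    intro v
    unfold bmap
    split_ifs <;> exact ⟨_, rfl⟩
  have hfb : ∀ v, fstar f (bmap G rank f v) = none := by
    intro v
    obtain ⟨y, hy⟩ := hbmap_inr v
    rw [hy]
    rfl
  have hbmap_ne_orig : ∀ v w, bmap G rank f v ≠ origV w := by
    intro v w
    obtain ⟨y, hy⟩ := hbmap_inr v
    rw [hy]
    simp [origV]
  set q : ℕ → Vstar V := fun i =>
    if i = 0 then bmap G rank f (p 0)
    else if i ≤ n + 1 then origV (p (i - 1)) else bmap G rank f (p n) with hqdef
  have hq0 : q 0 = bmap G rank f (p 0) := by simp [hqdef]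
  have hqmid : ∀ i, 1 ≤ i → i ≤ n + 1 → q i = origV (p (i - 1)) := by
    intro i h1' h2'
    simp only [hqdef]
    rw [if_neg (by omega), if_pos h2']
  have hqe : q (n + 2) = bmap G rank f (p n) := by
    simp only [hqdef]
    rw [if_neg (by omega), if_neg (by omega)]
  have hfo : ∀ a b : V, fstar f (origV a) = some (origV b) ↔ f a = some b := by
    intro a b
    simp [fstar, origV, Option.map_eq_some_iff]
  have hwE0 : ∀ a b, f a = some b → wE rank f a b = 0 := by
    intro a b hab
    have hba := hM.1 _ _ hab
    simp [wE, vote, hab, hba]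
  have hmedge : ∀ a b, f a = some b → (GMstar G rank f).Adj (Sum.inl a) (Sum.inl b) := by
    intro a b hab
    have hadj : G.Adj a b := hM.2 _ _ hab
    have hba := hM.1 _ _ hab
    refine ⟨by simp [hadj.ne], Or.inl (Or.inl ⟨a, b, ⟨hadj, by rw [hwE0 a b hab]; omega⟩,
      fun hblk => hblk.2.1 hab, ?_, ?_⟩)⟩
    · simp [projV, hab, origV]
    · simp [projV, hba, origV]
  have hMstar : IsMatchingOn (GMstar G rank f) (fstar f) := by
    constructor
    · intro v w hvw
      rcases v with a | y
      · rw [show fstar f (Sum.inl a) = (f a).map Sum.inl from rfl] at hvw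
        obtain ⟨b, hab, rfl⟩ := Option.map_eq_some_iff.mp hvw
        have hba := hM.1 _ _ hab
        show (f b).map Sum.inl = some (Sum.inl a)
        rw [hba]
        rfl
      · rw [show fstar f (Sum.inr y) = none from rfl] at hvw
        cases hvw
    · intro v w hvw
      rcases v with a | y
      · rw [show fstar f (Sum.inl a) = (f a).map Sum.inl from rfl] at hvw
        obtain ⟨b, hab, rfl⟩ := Option.map_eq_some_iff.mp hvw
        exact hmedge a b hab
      · rw [show fstar f (Sum.inr y) = none from rfl] at hvw
        cases hvw
  have haltstar : AltPath (GMstar G rank f) (fstar f) q (n + 2) := by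
    refine ⟨?_, ?_, ?_⟩
    · -- injectivity
      intro i j hi hj hij
      have hcase : ∀ a, a ≤ n + 2 → a = 0 ∨ (1 ≤ a ∧ a ≤ n + 1) ∨ a = n + 2 := by omega
      rcases hcase i hi with rfl | ⟨hi1, hi2⟩ | rfl <;>
        rcases hcase j hj with rfl | ⟨hj1, hj2⟩ | rfl
      · rfl
      · rw [hq0, hqmid j hj1 hj2] at hij
        exact absurd hij (hbmap_ne_orig _ _)
      · rw [hq0, hqe] at hij
        exact absurd hij hbmap_ne
      · rw [hq0, hqmid i hi1 hi2] at hij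
        exact absurd hij.symm (hbmap_ne_orig _ _)
      · rw [hqmid i hi1 hi2, hqmid j hj1 hj2] at hij
        have h' : p (i - 1) = p (j - 1) := by simpa [origV] using hij
        have := hinj (i - 1) (j - 1) (by omega) (by omega) h'
        omega
      · rw [hqmid i hi1 hi2, hqe] at hij
        exact absurd hij.symm (hbmap_ne_orig _ _)
      · rw [hqe, hq0] at hij
        exact absurd hij.symm hbmap_ne
      · rw [hqe, hqmid j hj1 hj2] at hij
        exact absurd hij (hbmap_ne_orig _ _)
      · rfl
    · -- adjacency
      intro i hilt
      have hcase : i = 0 ∨ (1 ≤ i ∧ i ≤ n) ∨ i = n + 1 := by omega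
      rcases hcase with rfl | ⟨hi1, hi2⟩ | rfl
      · rw [hq0, hqmid 1 le_rfl (by omega)]
        exact ⟨hbmap_ne_orig _ _, Or.inr (Or.inr ⟨p 0, ⟨p n, hb⟩,
          by rw [hproj 0 (by omega)], rfl⟩)⟩
      · rw [hqmid i hi1 (by omega), hqmid (i + 1) (by omega) (by omega)]
        have hne : p (i - 1) ≠ p (i + 1 - 1) := by
          intro h
          have := hinj (i - 1) (i + 1 - 1) (by omega) (by omega) h
          omega
        have hadjG : (GMgraph G rank f).Adj (p (i - 1)) (p i) := by
          have := hadjp (i - 1) (by omega)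
          rwa [show i - 1 + 1 = i by omega] at this
        have hnb : ¬ BlockingEdge G rank f (p (i - 1)) (p i) := by
          have := huniq (i - 1) (by omega)
          rwa [show i - 1 + 1 = i by omega] at this
        refine ⟨by simpa [origV] using hne, Or.inl (Or.inl ⟨p (i - 1), p i, hadjG, hnb, ?_, ?_⟩)⟩
        · rw [hproj (i - 1) (by omega)]
        · rw [hproj i (by omega), show i + 1 - 1 = i by omega]
      · rw [hqmid (n + 1) (by omega) le_rfl, hqe]
        refine ⟨Ne.symm (hbmap_ne_orig _ _), Or.inl (Or.inr ⟨p n, ⟨p 0, hbsymm⟩, ?_, rfl⟩)⟩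
        rw [hproj n le_rfl, show n + 1 - 1 = n by omega]
    · -- alternation
      intro i hilt
      have hcase : i = 0 ∨ (1 ≤ i ∧ i ≤ n - 1) ∨ i = n := by omega
      rcases hcase with rfl | ⟨hi1, hi2⟩ | hin
      · rw [hq0, hqmid 1 le_rfl (by omega), hqmid 2 (by omega) (by omega)]
        have hright : fstar f (origV (p 0)) = some (origV (p 1)) := by
          rw [hfo]
          exact h1
        simp [hfb, hright]
      · rw [hqmid i hi1 (by omega), hqmid (i + 1) (by omega) (by omega),
          hqmid (i + 2) (by omega) (by omega)]
        rw [hfo, hfo]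
        have h := haltp (i - 1) (by omega)
        rw [show i - 1 + 1 = i by omega, show i - 1 + 1 + 1 = i + 1 by omega] at h
        rw [show i + 1 - 1 = i by omega,
          show i + 2 - 1 = i + 1 by omega]
        exact h
      · rw [hin]
        rw [hqmid n (by omega) (by omega), hqmid (n + 1) (by omega) le_rfl, hqe]
        have hl : fstar f (origV (p (n - 1))) = some (origV (p n)) := by
          rw [hfo]
          exact h2
        have hr : ¬ fstar f (origV (p n)) = some (bmap G rank f (p n)) := by
          obtain ⟨y, hy⟩ := hbmap_inr (p n)
          rw [hy]
          simp [fstar, origV, Option.map_eq_some_iff]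
        simp [hl, hr]
  have hu0 : fstar f (q 0) = none := by rw [hq0]; exact hfb _
  have hue : fstar f (q (n + 2)) = none := by rw [hqe]; exact hfb _
  refine ⟨⟨q, haltstar, hq0, hqe, hbmap_ne, hu0, hue⟩, ?_⟩
  exact matching_augment _ _ hMstar q (n + 2)
    (by obtain ⟨k, hk⟩ := hnodd; exact ⟨k + 1, by omega⟩) haltstar hu0 hue
end
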